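/- Assume f, g : ℝ → ℝ are C² and H : M → ℝ is C¹ and satisfies f(H(q,p)) = |p|²/2 − g(H(q,p))/|q| for all (q,p) ∈ M. Define A^i(q,p) = |p|² q^i − (p·q) p^i − g(H(q,p)) q^i/|q| and the rescaled Laplace–Runge–Lenz vector Ā^i(q,p) = −A^i(q,p)/√(−2 f(H(q,p))). Let E ∈ ℝ with f(E) < 0. Then at every point (q,p) ∈ M with H(q,p) = E and f'(E) + g'(E)/|q| ≠ 0, one has {Ā^i, Ā^j}(q,p) = Σ_{k=1}^{3} ε_{ijk} L^k(q,p) for all i, j ∈ {1,2,3}, where L = q × p and ε_{ijk} is the Levi-Civita symbol. -/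

import Mathlib

noncomputable section

/-- Squared Euclidean norm on `ℝ³`. -/
def normSq (v : Fin 3 → ℝ) : ℝ := ∑ i, v i ^ 2

/-- Euclidean norm on `ℝ³`. -/
def nrm (v : Fin 3 → ℝ) : ℝ := Real.sqrt (normSq v)

/-- Euclidean inner product `p·q`. -/
def dotP (p q : Fin 3 → ℝ) : ℝ := ∑ i, p i * q i

/-- Partial derivative `∂F/∂q^k` of a Hamiltonian function at `(q,p)`. -/
def pdQ (F : (Fin 3 → ℝ) → (Fin 3 → ℝ) → ℝ) (q p : Fin 3 → ℝ) (k : Fin 3) : ℝ :=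
  deriv (fun t => F (Function.update q k t) p) (q k)

/-- Partial derivative `∂F/∂p^k` of a Hamiltonian function at `(q,p)`. -/
def pdP (F : (Fin 3 → ℝ) → (Fin 3 → ℝ) → ℝ) (q p : Fin 3 → ℝ) (k : Fin 3) : ℝ :=
  deriv (fun t => F q (Function.update p k t)) (p k)

/-- The Hamiltonian vector field `X_F(q,p) = (∂F/∂p, −∂F/∂q)`. -/
def Xham (F : (Fin 3 → ℝ) → (Fin 3 → ℝ) → ℝ) (q p : Fin 3 → ℝ) :
    (Fin 3 → ℝ) × (Fin 3 → ℝ) :=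
  (fun k => pdP F q p k, fun k => -pdQ F q p k)


/-- The canonical Poisson bracket `{F,G} = Σ_k (∂F/∂q^k ∂G/∂p^k − ∂F/∂p^k ∂G/∂q^k)`. -/
def pbr (F G : (Fin 3 → ℝ) → (Fin 3 → ℝ) → ℝ) (q p : Fin 3 → ℝ) : ℝ :=
  ∑ k, (pdQ F q p k * pdP G q p k - pdP F q p k * pdQ G q p k)

/-- Cross product on `ℝ³`; `cross q p` is the angular momentum `L = q × p` at `(q,p)`. -/
def cross (a b : Fin 3 → ℝ) : Fin 3 → ℝ :=
  fun i => a (i + 1) * b (i + 2) - a (i + 2) * b (i + 1)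

/-- The Levi-Civita symbol `ε_{ijk}` on three indices. -/
def levi (i j k : Fin 3) : ℝ :=
  (((i : ℕ) : ℝ) - ((j : ℕ) : ℝ)) * (((j : ℕ) : ℝ) - ((k : ℕ) : ℝ))
    * (((k : ℕ) : ℝ) - ((i : ℕ) : ℝ)) / 2

/-- The Laplace–Runge–Lenz vector `A^i = |p|² q^i − (p·q) p^i − g(H(q,p)) q^i/|q|`. -/
def LRL (g : ℝ → ℝ) (H : (Fin 3 → ℝ) → (Fin 3 → ℝ) → ℝ) (i : Fin 3) :
    (Fin 3 → ℝ) → (Fin 3 → ℝ) → ℝ :=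
  fun q p => normSq p * q i - dotP p q * p i - g (H q p) * q i / nrm q

/-- The rescaled Laplace–Runge–Lenz vector `Ā^i = −A^i/√(−2 f(H))`. -/
def LRLbar (f g : ℝ → ℝ) (H : (Fin 3 → ℝ) → (Fin 3 → ℝ) → ℝ) (i : Fin 3) :
    (Fin 3 → ℝ) → (Fin 3 → ℝ) → ℝ :=
  fun q p => -(LRL g H i q p) / Real.sqrt (-(2 * f (H q p)))


/-! ### Auxiliary lemmas -/

lemma normSq_nonneg' (v : Fin 3 → ℝ) : 0 ≤ normSq v :=
  Finset.sum_nonneg fun _ _ => sq_nonneg _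

lemma normSq_pos' {v : Fin 3 → ℝ} (hv : v ≠ 0) : 0 < normSq v := by
  rcases (normSq_nonneg' v).lt_or_eq with h | h
  · exact h
  · exfalso; apply hv; funext m
    have h2 := (Finset.sum_eq_zero_iff_of_nonneg (fun i _ => sq_nonneg (v i))).1 h.symm m
      (Finset.mem_univ m)
    simpa using (pow_eq_zero_iff two_ne_zero).1 h2

lemma nrm_pos' {v : Fin 3 → ℝ} (hv : v ≠ 0) : 0 < nrm v := Real.sqrt_pos.2 (normSq_pos' hv)
lemma nrm_sq' (v : Fin 3 → ℝ) : nrm v ^ 2 = normSq v := Real.sq_sqrt (normSq_nonneg' v)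

lemma update_ne_zero_eventually (q : Fin 3 → ℝ) (k : Fin 3) (hq : q ≠ 0) :
    ∀ᶠ t in nhds (q k), Function.update q k t ≠ 0 := by
  have hcont : Continuous (fun t : ℝ => Function.update q k t) := by
    refine continuous_pi fun m => ?_
    simp only [Function.update_apply]
    split <;> [exact continuous_id; exact continuous_const]
  have hO : IsOpen {x : Fin 3 → ℝ | x ≠ 0} := isOpen_compl_singleton
  have hmem : q k ∈ (fun t : ℝ => Function.update q k t) ⁻¹' {x | x ≠ 0} := by
    simp only [Set.mem_preimage, Set.mem_setOf_eq, Function.update_eq_self]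
    exact hq
  exact Filter.eventually_iff.mpr ((hO.preimage hcont).mem_nhds hmem)

lemma normSq_update (q : Fin 3 → ℝ) (k : Fin 3) (t : ℝ) :
    normSq (Function.update q k t) = normSq q - q k ^ 2 + t ^ 2 := by
  fin_cases k <;> simp [normSq, Fin.sum_univ_three, Function.update] <;> ring

lemma dotP_update_right (p q : Fin 3 → ℝ) (k : Fin 3) (t : ℝ) :
    dotP p (Function.update q k t) = dotP p q + p k * (t - q k) := by
  fin_cases k <;> simp [dotP, Fin.sum_univ_three, Function.update] <;> ring

lemma dotP_update_left (p q : Fin 3 → ℝ) (k : Fin 3) (t : ℝ) :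
    dotP (Function.update p k t) q = dotP p q + q k * (t - p k) := by
  fin_cases k <;> simp [dotP, Fin.sum_univ_three, Function.update] <;> ring

lemma diff_H_Q (H : (Fin 3 → ℝ) → (Fin 3 → ℝ) → ℝ)
    (hH : ContDiffOn ℝ 1 (fun x : (Fin 3 → ℝ) × (Fin 3 → ℝ) => H x.1 x.2) {x | x.1 ≠ 0})
    (q p : Fin 3 → ℝ) (hq : q ≠ 0) (k : Fin 3) :
    DifferentiableAt ℝ (fun t => H (Function.update q k t) p) (q k) := by
  have hO : IsOpen {x : (Fin 3 → ℝ) × (Fin 3 → ℝ) | x.1 ≠ 0} :=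
    isOpen_compl_singleton.preimage continuous_fst
  have hdH : DifferentiableAt ℝ (fun x : (Fin 3 → ℝ) × (Fin 3 → ℝ) => H x.1 x.2) (q, p) :=
    ((hH.differentiableOn one_ne_zero).differentiableAt (hO.mem_nhds hq))
  have hcurve : DifferentiableAt ℝ (fun t : ℝ => ((Function.update q k t, p) :
      (Fin 3 → ℝ) × (Fin 3 → ℝ))) (q k) := by
    refine DifferentiableAt.prodMk ?_ (differentiableAt_const _)
    refine differentiableAt_pi.mpr fun m => ?_
    simp only [Function.update_apply]
    split <;> [exact differentiableAt_id; exact differentiableAt_const _]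
  have h1 : DifferentiableAt ℝ (fun x : (Fin 3 → ℝ) × (Fin 3 → ℝ) => H x.1 x.2)
      (Function.update q k (q k), p) := by rw [Function.update_eq_self]; exact hdH
  exact h1.comp (q k) hcurve

lemma diff_H_P (H : (Fin 3 → ℝ) → (Fin 3 → ℝ) → ℝ)
    (hH : ContDiffOn ℝ 1 (fun x : (Fin 3 → ℝ) × (Fin 3 → ℝ) => H x.1 x.2) {x | x.1 ≠ 0})
    (q p : Fin 3 → ℝ) (hq : q ≠ 0) (k : Fin 3) :
    DifferentiableAt ℝ (fun t => H q (Function.update p k t)) (p k) := by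
  have hO : IsOpen {x : (Fin 3 → ℝ) × (Fin 3 → ℝ) | x.1 ≠ 0} :=
    isOpen_compl_singleton.preimage continuous_fst
  have hdH : DifferentiableAt ℝ (fun x : (Fin 3 → ℝ) × (Fin 3 → ℝ) => H x.1 x.2) (q, p) :=
    ((hH.differentiableOn one_ne_zero).differentiableAt (hO.mem_nhds hq))
  have hcurve : DifferentiableAt ℝ (fun t : ℝ => ((q, Function.update p k t) :
      (Fin 3 → ℝ) × (Fin 3 → ℝ))) (p k) := by
    refine DifferentiableAt.prodMk (differentiableAt_const _) ?_
    refine differentiableAt_pi.mpr fun m => ?_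
    simp only [Function.update_apply]
    split <;> [exact differentiableAt_id; exact differentiableAt_const _]
  have h1 : DifferentiableAt ℝ (fun x : (Fin 3 → ℝ) × (Fin 3 → ℝ) => H x.1 x.2)
      (q, Function.update p k (p k)) := by rw [Function.update_eq_self]; exact hdH
  exact h1.comp (g := fun x : (Fin 3 → ℝ) × (Fin 3 → ℝ) => H x.1 x.2) (p k) hcurve

lemma hasDerivAt_nrm_update (q : Fin 3 → ℝ) (hq : q ≠ 0) (k : Fin 3) :
    HasDerivAt (fun t => nrm (Function.update q k t)) (q k / nrm q) (q k) := by
  have hfun : (fun t => nrm (Function.update q k t))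
      = fun t => Real.sqrt (normSq q - q k ^ 2 + t ^ 2) :=
    funext fun t => by rw [nrm, normSq_update]
  rw [hfun]
  have hinner : HasDerivAt (fun t : ℝ => normSq q - q k ^ 2 + t ^ 2) (2 * q k) (q k) := by
    simpa using (hasDerivAt_pow 2 (q k)).const_add (normSq q - q k ^ 2)
  have hx : normSq q - q k ^ 2 + q k ^ 2 ≠ 0 := by
    have := normSq_pos' hq; intro h; nlinarith
  have hthis := hinner.sqrt hx
  rw [show normSq q - q k ^ 2 + q k ^ 2 = normSq q by ring] at hthis
  have hs0 : Real.sqrt (normSq q) ≠ 0 := (Real.sqrt_pos.2 (normSq_pos' hq)).ne'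
  convert hthis using 1
  rw [nrm]
  field_simp

/-- The key implicit derivative in the `q` directions. -/
lemma hasDerivAt_fH_Q (f g : ℝ → ℝ) (H : (Fin 3 → ℝ) → (Fin 3 → ℝ) → ℝ)
    (hf : ContDiff ℝ 2 f) (hg : ContDiff ℝ 2 g)
    (hH : ContDiffOn ℝ 1 (fun x : (Fin 3 → ℝ) × (Fin 3 → ℝ) => H x.1 x.2) {x | x.1 ≠ 0})
    (hrel : ∀ q p : Fin 3 → ℝ, q ≠ 0 → f (H q p) = normSq p / 2 - g (H q p) / nrm q)
    (E : ℝ) (q p : Fin 3 → ℝ) (hq : q ≠ 0) (hHE : H q p = E)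
    (hD : deriv f E + deriv g E / nrm q ≠ 0) (k : Fin 3) :
    HasDerivAt (fun t => f (H (Function.update q k t) p))
      (deriv f E / (deriv f E + deriv g E / nrm q) * (normSq p / 2 - f E) * q k / normSq q)
      (q k) := by
  have hr : (0:ℝ) < nrm q := nrm_pos' hq
  have hn : (0:ℝ) < normSq q := normSq_pos' hq
  set a := deriv (fun t => H (Function.update q k t) p) (q k) with ha_def
  have ha : HasDerivAt (fun t => H (Function.update q k t) p) a (q k) :=
    (diff_H_Q H hH q p hq k).hasDerivAt
  have h0 : H (Function.update q k (q k)) p = E := by rw [Function.update_eq_self]; exact hHE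
  have hfE : HasDerivAt f (deriv f E) E := ((hf.differentiable two_ne_zero) E).hasDerivAt
  have hgE : HasDerivAt g (deriv g E) E := ((hg.differentiable two_ne_zero) E).hasDerivAt
  have hfE' : HasDerivAt f (deriv f E) (H (Function.update q k (q k)) p) := by
    rw [h0]; exact hfE
  have hgE' : HasDerivAt g (deriv g E) (H (Function.update q k (q k)) p) := by
    rw [h0]; exact hgE
  have hfh : HasDerivAt (fun t => f (H (Function.update q k t) p)) (deriv f E * a) (q k) := by
    simpa [Function.comp_def] using hfE'.comp (q k) ha
  have hgh : HasDerivAt (fun t => g (H (Function.update q k t) p)) (deriv g E * a) (q k) := by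
    simpa [Function.comp_def] using hgE'.comp (q k) ha
  have hρ := hasDerivAt_nrm_update q hq k
  have hρ0 : nrm (Function.update q k (q k)) = nrm q := by rw [Function.update_eq_self]
  have hdiv : HasDerivAt (fun t => g (H (Function.update q k t) p) / nrm (Function.update q k t))
      ((deriv g E * a * nrm q - g E * (q k / nrm q)) / nrm q ^ 2) (q k) := by
    have := hgh.div hρ (by rw [hρ0]; exact hr.ne')
    simp [hρ0, h0, hHE] at this ⊢; exact this
  have hφ1 : HasDerivAt (fun t => f (H (Function.update q k t) p)
        + g (H (Function.update q k t) p) / nrm (Function.update q k t))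
      (deriv f E * a + (deriv g E * a * nrm q - g E * (q k / nrm q)) / nrm q ^ 2) (q k) :=
    hfh.add hdiv
  have hφ2 : HasDerivAt (fun t => f (H (Function.update q k t) p)
        + g (H (Function.update q k t) p) / nrm (Function.update q k t)) 0 (q k) := by
    have hev : (fun t => f (H (Function.update q k t) p)
        + g (H (Function.update q k t) p) / nrm (Function.update q k t))
        =ᶠ[nhds (q k)] fun _ => normSq p / 2 := by
      refine (update_ne_zero_eventually q k hq).mono fun t ht => ?_
      have := hrel (Function.update q k t) p ht
      linarith
    exact (hasDerivAt_const (q k) (normSq p / 2)).congr_of_eventuallyEq hev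
  have huniq := hφ1.unique hφ2
  have hgEval : g E = nrm q * (normSq p / 2 - f E) := by
    have := hrel q p hq
    rw [hHE] at this
    field_simp at this
    linarith
  have hkey : (deriv f E + deriv g E / nrm q) * a = (normSq p / 2 - f E) * q k / normSq q := by
    rw [hgEval] at huniq
    have hr2 : nrm q ^ 2 = normSq q := nrm_sq' q
    field_simp at huniq ⊢
    rw [← hr2]
    nlinarith [huniq]
  have haval : a = (normSq p / 2 - f E) * q k / normSq q / (deriv f E + deriv g E / nrm q) :=
    (eq_div_iff hD).mpr (by rw [mul_comm]; exact hkey)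
  rw [haval] at hfh
  convert hfh using 1
  ring

/-- The key implicit derivative in the `p` directions. -/
lemma hasDerivAt_fH_P (f g : ℝ → ℝ) (H : (Fin 3 → ℝ) → (Fin 3 → ℝ) → ℝ)
    (hf : ContDiff ℝ 2 f) (hg : ContDiff ℝ 2 g)
    (hH : ContDiffOn ℝ 1 (fun x : (Fin 3 → ℝ) × (Fin 3 → ℝ) => H x.1 x.2) {x | x.1 ≠ 0})
    (hrel : ∀ q p : Fin 3 → ℝ, q ≠ 0 → f (H q p) = normSq p / 2 - g (H q p) / nrm q)
    (E : ℝ) (q p : Fin 3 → ℝ) (hq : q ≠ 0) (hHE : H q p = E)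
    (hD : deriv f E + deriv g E / nrm q ≠ 0) (k : Fin 3) :
    HasDerivAt (fun t => f (H q (Function.update p k t)))
      (deriv f E / (deriv f E + deriv g E / nrm q) * p k) (p k) := by
  have hr : (0:ℝ) < nrm q := nrm_pos' hq
  set b := deriv (fun t => H q (Function.update p k t)) (p k) with hb_def
  have hb : HasDerivAt (fun t => H q (Function.update p k t)) b (p k) :=
    (diff_H_P H hH q p hq k).hasDerivAt
  have h0 : H q (Function.update p k (p k)) = E := by rw [Function.update_eq_self]; exact hHE
  have hfE' : HasDerivAt f (deriv f E) (H q (Function.update p k (p k))) := by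
    rw [h0]; exact ((hf.differentiable two_ne_zero) E).hasDerivAt
  have hgE' : HasDerivAt g (deriv g E) (H q (Function.update p k (p k))) := by
    rw [h0]; exact ((hg.differentiable two_ne_zero) E).hasDerivAt
  have hfh : HasDerivAt (fun t => f (H q (Function.update p k t))) (deriv f E * b) (p k) := by
    simpa [Function.comp_def] using hfE'.comp (p k) hb
  have hgh : HasDerivAt (fun t => g (H q (Function.update p k t))) (deriv g E * b) (p k) := by
    simpa [Function.comp_def] using hgE'.comp (p k) hb
  have hφ1 : HasDerivAt (fun t => f (H q (Function.update p k t))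
        + g (H q (Function.update p k t)) / nrm q - (normSq p - p k ^ 2 + t ^ 2) / 2)
      (deriv f E * b + (deriv g E * b) / nrm q - p k) (p k) := by
    have hpow : HasDerivAt (fun t : ℝ => (normSq p - p k ^ 2 + t ^ 2) / 2) (p k) (p k) := by
      have : HasDerivAt (fun t : ℝ => normSq p - p k ^ 2 + t ^ 2) (2 * p k) (p k) := by
        simpa using (hasDerivAt_pow 2 (p k)).const_add (normSq p - p k ^ 2)
      simpa using this.div_const 2
    exact (hfh.add (hgh.div_const (nrm q))).sub hpow
  have hφ2 : HasDerivAt (fun t => f (H q (Function.update p k t))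
        + g (H q (Function.update p k t)) / nrm q - (normSq p - p k ^ 2 + t ^ 2) / 2)
      0 (p k) := by
    have heq : (fun t => f (H q (Function.update p k t))
        + g (H q (Function.update p k t)) / nrm q - (normSq p - p k ^ 2 + t ^ 2) / 2)
        = fun _ => 0 := by
      funext t
      have := hrel q (Function.update p k t) hq
      rw [normSq_update] at this
      linarith
    rw [heq]
    exact hasDerivAt_const _ _
  have huniq := hφ1.unique hφ2
  have hkey : (deriv f E + deriv g E / nrm q) * b = p k := by
    field_simp at huniq ⊢
    linarith [huniq]
  have hbval : b = p k / (deriv f E + deriv g E / nrm q) :=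
    (eq_div_iff hD).mpr (by rw [mul_comm]; exact hkey)
  rw [hbval] at hfh
  convert hfh using 1
  ring

/-- Normalized numerator of `∂(Ā_i)/∂q^k` over `B³` (with an internal `/|q|²`). -/
def QVal (c fE : ℝ) (q p : Fin 3 → ℝ) (i k : Fin 3) : ℝ :=
  2 * fE * (c * (normSq p / 2 - fE) * q k / normSq q * q i
      + (normSq p / 2 + fE) * (if i = k then 1 else 0) - p k * p i)
    - ((normSq p / 2 + fE) * q i - dotP p q * p i) * (c * (normSq p / 2 - fE) * q k / normSq q)

/-- Normalized numerator of `∂(Ā_i)/∂p^k` over `B³`. -/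
def PVal (c fE : ℝ) (q p : Fin 3 → ℝ) (i k : Fin 3) : ℝ :=
  2 * fE * ((1 + c) * p k * q i - q k * p i - dotP p q * (if i = k then 1 else 0))
    - ((normSq p / 2 + fE) * q i - dotP p q * p i) * (c * p k)

/-- Division-free version of `QVal`: `QVal = QNum / |q|²`. -/
def QNum (c fE : ℝ) (q p : Fin 3 → ℝ) (i k : Fin 3) : ℝ :=
  2 * fE * (c * (normSq p / 2 - fE) * q k * q i
      + (normSq p / 2 + fE) * (if i = k then 1 else 0) * normSq q - p k * p i * normSq q)
    - ((normSq p / 2 + fE) * q i - dotP p q * p i) * (c * (normSq p / 2 - fE) * q k)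

lemma QVal_eq (c fE : ℝ) (q p : Fin 3 → ℝ) (hn : normSq q ≠ 0) (i k : Fin 3) :
    QVal c fE q p i k = QNum c fE q p i k / normSq q := by
  rw [QVal, QNum]
  set d : ℝ := (if i = k then (1:ℝ) else 0) with hd
  field_simp

lemma LRLbar_eq (f g : ℝ → ℝ) (H : (Fin 3 → ℝ) → (Fin 3 → ℝ) → ℝ)
    (hrel : ∀ q p : Fin 3 → ℝ, q ≠ 0 → f (H q p) = normSq p / 2 - g (H q p) / nrm q)
    (i : Fin 3) (q p : Fin 3 → ℝ) (hq : q ≠ 0) :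
    LRLbar f g H i q p
      = -((normSq p / 2 + f (H q p)) * q i - dotP p q * p i)
          / Real.sqrt (-(2 * f (H q p))) := by
  have hr : nrm q ≠ 0 := (nrm_pos' hq).ne'
  have h1 : g (H q p) = nrm q * (normSq p / 2 - f (H q p)) := by
    have := hrel q p hq
    field_simp at this
    linarith
  unfold LRLbar LRL
  congr 2
  rw [h1]
  field_simp
  ring

lemma pdQ_LRLbar (f g : ℝ → ℝ) (H : (Fin 3 → ℝ) → (Fin 3 → ℝ) → ℝ)
    (hf : ContDiff ℝ 2 f) (hg : ContDiff ℝ 2 g)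
    (hH : ContDiffOn ℝ 1 (fun x : (Fin 3 → ℝ) × (Fin 3 → ℝ) => H x.1 x.2) {x | x.1 ≠ 0})
    (hrel : ∀ q p : Fin 3 → ℝ, q ≠ 0 → f (H q p) = normSq p / 2 - g (H q p) / nrm q)
    (E : ℝ) (hE : f E < 0) (q p : Fin 3 → ℝ) (hq : q ≠ 0) (hHE : H q p = E)
    (hD : deriv f E + deriv g E / nrm q ≠ 0) (i k : Fin 3) :
    pdQ (LRLbar f g H i) q p k
      = QVal (deriv f E / (deriv f E + deriv g E / nrm q)) (f E) q p i k
          / Real.sqrt (-(2 * f E)) ^ 3 := by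
  have hn : (0:ℝ) < normSq q := normSq_pos' hq
  set c := deriv f E / (deriv f E + deriv g E / nrm q) with hc
  set u' := c * (normSq p / 2 - f E) * q k / normSq q with hu'
  have hu : HasDerivAt (fun t => f (H (Function.update q k t) p)) u' (q k) :=
    hasDerivAt_fH_Q f g H hf hg hH hrel E q p hq hHE hD k
  have h0 : f (H (Function.update q k (q k)) p) = f E := by
    rw [Function.update_eq_self, hHE]
  have harg : -(2 * f (H (Function.update q k (q k)) p)) = -(2 * f E) := by rw [h0]
  have hargpos : (0:ℝ) < -(2 * f E) := by linarith
  set B := Real.sqrt (-(2 * f E)) with hBdef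
  have hB : (0:ℝ) < B := Real.sqrt_pos.2 hargpos
  have hB2 : B ^ 2 = -(2 * f E) := Real.sq_sqrt hargpos.le
  have hfEeq : f E = -(B ^ 2) / 2 := by rw [hB2]; ring
  have hQi : HasDerivAt (fun t => Function.update q k t i)
      (if i = k then (1:ℝ) else 0) (q k) := by
    simp only [Function.update_apply]
    by_cases h : i = k
    · simp only [h, if_pos rfl]
      exact hasDerivAt_id (q k)
    · simp only [if_neg h]
      exact hasDerivAt_const _ _
  have hw : HasDerivAt (fun t => dotP p (Function.update q k t)) (p k) (q k) := by
    have hfun : (fun t => dotP p (Function.update q k t))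
        = fun t => dotP p q + p k * (t - q k) := funext fun t => dotP_update_right p q k t
    rw [hfun]
    simpa using (((hasDerivAt_id (q k)).sub_const (q k)).const_mul (p k)).const_add (dotP p q)
  have hnum : HasDerivAt (fun t => -((normSq p / 2 + f (H (Function.update q k t) p))
        * (Function.update q k t i) - dotP p (Function.update q k t) * p i))
      (-((0 + u') * q i + (normSq p / 2 + f E) * (if i = k then (1:ℝ) else 0) - p k * p i))
      (q k) := by
    have := ((((hasDerivAt_const (q k) (normSq p / 2)).add hu).mul hQi).sub
      (hw.mul_const (p i))).neg
    simp [Function.update_eq_self, hHE] at this ⊢; exact this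
  have hden : HasDerivAt (fun t => Real.sqrt (-(2 * f (H (Function.update q k t) p))))
      (-(2 * u') / (2 * B)) (q k) := by
    have := ((hu.const_mul 2).neg).sqrt (x := q k) (by show -(2 * f (H (Function.update q k (q k)) p)) ≠ 0; rw [harg]; exact hargpos.ne')
    simpa [Function.update_eq_self, hHE, hBdef] using this
  have hF : HasDerivAt (fun t => -((normSq p / 2 + f (H (Function.update q k t) p))
        * (Function.update q k t i) - dotP p (Function.update q k t) * p i)
        / Real.sqrt (-(2 * f (H (Function.update q k t) p))))
      ((-((0 + u') * q i + (normSq p / 2 + f E) * (if i = k then (1:ℝ) else 0) - p k * p i) * B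
        - -((normSq p / 2 + f E) * q i - dotP p q * p i) * (-(2 * u') / (2 * B))) / B ^ 2)
      (q k) := by
    have := hnum.div hden (by rw [harg, ← hBdef]; exact hB.ne')
    simp [Function.update_eq_self, hHE, hBdef] at this ⊢; exact this
  have hev : (fun t => LRLbar f g H i (Function.update q k t) p)
      =ᶠ[nhds (q k)] (fun t => -((normSq p / 2 + f (H (Function.update q k t) p))
        * (Function.update q k t i) - dotP p (Function.update q k t) * p i)
        / Real.sqrt (-(2 * f (H (Function.update q k t) p)))) :=
    (update_ne_zero_eventually q k hq).mono fun t ht =>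
      LRLbar_eq f g H hrel i (Function.update q k t) p ht
  have := hev.deriv_eq
  rw [pdQ, this, hF.deriv]
  rw [QVal]
  rw [hu', hc, hfEeq]
  set d : ℝ := (if i = k then (1:ℝ) else 0) with hd
  field_simp
  ring

lemma pdP_LRLbar (f g : ℝ → ℝ) (H : (Fin 3 → ℝ) → (Fin 3 → ℝ) → ℝ)
    (hf : ContDiff ℝ 2 f) (hg : ContDiff ℝ 2 g)
    (hH : ContDiffOn ℝ 1 (fun x : (Fin 3 → ℝ) × (Fin 3 → ℝ) => H x.1 x.2) {x | x.1 ≠ 0})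
    (hrel : ∀ q p : Fin 3 → ℝ, q ≠ 0 → f (H q p) = normSq p / 2 - g (H q p) / nrm q)
    (E : ℝ) (hE : f E < 0) (q p : Fin 3 → ℝ) (hq : q ≠ 0) (hHE : H q p = E)
    (hD : deriv f E + deriv g E / nrm q ≠ 0) (i k : Fin 3) :
    pdP (LRLbar f g H i) q p k
      = PVal (deriv f E / (deriv f E + deriv g E / nrm q)) (f E) q p i k
          / Real.sqrt (-(2 * f E)) ^ 3 := by
  set c := deriv f E / (deriv f E + deriv g E / nrm q) with hc
  set u' := c * p k with hu'
  have hu : HasDerivAt (fun t => f (H q (Function.update p k t))) u' (p k) :=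
    hasDerivAt_fH_P f g H hf hg hH hrel E q p hq hHE hD k
  have h0 : f (H q (Function.update p k (p k))) = f E := by
    rw [Function.update_eq_self, hHE]
  have harg : -(2 * f (H q (Function.update p k (p k)))) = -(2 * f E) := by rw [h0]
  have hargpos : (0:ℝ) < -(2 * f E) := by linarith
  set B := Real.sqrt (-(2 * f E)) with hBdef
  have hB : (0:ℝ) < B := Real.sqrt_pos.2 hargpos
  have hB2 : B ^ 2 = -(2 * f E) := Real.sq_sqrt hargpos.le
  have hfEeq : f E = -(B ^ 2) / 2 := by rw [hB2]; ring
  have hPi : HasDerivAt (fun t => Function.update p k t i)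
      (if i = k then (1:ℝ) else 0) (p k) := by
    simp only [Function.update_apply]
    by_cases h : i = k
    · simp only [h, if_pos rfl]
      exact hasDerivAt_id (p k)
    · simp only [if_neg h]
      exact hasDerivAt_const _ _
  have hs : HasDerivAt (fun t => normSq (Function.update p k t) / 2) (p k) (p k) := by
    have hfun : (fun t => normSq (Function.update p k t) / 2)
        = fun t => (normSq p - p k ^ 2 + t ^ 2) / 2 := funext fun t => by rw [normSq_update]
    rw [hfun]
    have : HasDerivAt (fun t : ℝ => normSq p - p k ^ 2 + t ^ 2) (2 * p k) (p k) := by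
      simpa using (hasDerivAt_pow 2 (p k)).const_add (normSq p - p k ^ 2)
    simpa using this.div_const 2
  have hw : HasDerivAt (fun t => dotP (Function.update p k t) q) (q k) (p k) := by
    have hfun : (fun t => dotP (Function.update p k t) q)
        = fun t => dotP p q + q k * (t - p k) := funext fun t => dotP_update_left p q k t
    rw [hfun]
    simpa using (((hasDerivAt_id (p k)).sub_const (p k)).const_mul (q k)).const_add (dotP p q)
  have hnum : HasDerivAt (fun t => -((normSq (Function.update p k t) / 2
        + f (H q (Function.update p k t))) * q i
        - dotP (Function.update p k t) q * (Function.update p k t i)))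
      (-((p k + u') * q i - (q k * p i + dotP p q * (if i = k then (1:ℝ) else 0))))
      (p k) := by
    have := (((hs.add hu).mul_const (q i)).sub (hw.mul hPi)).neg
    simp [Function.update_eq_self, hHE] at this ⊢; exact this
  have hden : HasDerivAt (fun t => Real.sqrt (-(2 * f (H q (Function.update p k t)))))
      (-(2 * u') / (2 * B)) (p k) := by
    have := ((hu.const_mul 2).neg).sqrt (x := p k) (by show -(2 * f (H q (Function.update p k (p k)))) ≠ 0; rw [harg]; exact hargpos.ne')
    simpa [Function.update_eq_self, hHE, hBdef] using this
  have hF : HasDerivAt (fun t => -((normSq (Function.update p k t) / 2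
        + f (H q (Function.update p k t))) * q i
        - dotP (Function.update p k t) q * (Function.update p k t i))
        / Real.sqrt (-(2 * f (H q (Function.update p k t)))))
      ((-((p k + u') * q i - (q k * p i + dotP p q * (if i = k then (1:ℝ) else 0))) * B
        - -((normSq p / 2 + f E) * q i - dotP p q * p i) * (-(2 * u') / (2 * B))) / B ^ 2)
      (p k) := by
    have := hnum.div hden (by rw [harg, ← hBdef]; exact hB.ne')
    simp [Function.update_eq_self, hHE, hBdef] at this ⊢; exact this
  have hev : (fun t => LRLbar f g H i q (Function.update p k t))
      =ᶠ[nhds (p k)] (fun t => -((normSq (Function.update p k t) / 2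
        + f (H q (Function.update p k t))) * q i
        - dotP (Function.update p k t) q * (Function.update p k t i))
        / Real.sqrt (-(2 * f (H q (Function.update p k t))))) :=
    Filter.Eventually.of_forall fun t =>
      LRLbar_eq f g H hrel i q (Function.update p k t) hq
  have := hev.deriv_eq
  rw [pdP, this, hF.deriv]
  rw [PVal]
  rw [hu', hc, hfEeq]
  set d : ℝ := (if i = k then (1:ℝ) else 0) with hd
  field_simp
  ring

lemma bracket_term_helper (X Y X' Y' n B e : ℝ) (hn : n ≠ 0) (hB : B ≠ 0) (hB2 : B ^ 2 = e) :
    X / n / B ^ 3 * (Y / B ^ 3) - Y' / B ^ 3 * (X' / n / B ^ 3)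
      = (X * Y - Y' * X') / n / e ^ 3 := by
  subst hB2
  field_simp

set_option maxHeartbeats 1000000 in
/-- under the implicit Kepler-type relation `f(H) = |p|²/2 − g(H)/|q|`, for a
value `E` with `f(E) < 0`, at every point of the levelset `H = E` with
`f'(E) + g'(E)/|q| ≠ 0` the rescaled Laplace–Runge–Lenz vector satisfies
`{Ā^i, Ā^j} = Σ_k ε_{ijk} L^k` where `L = q × p`. -/
theorem rescaled_LRL_bracket_LRL
    (f g : ℝ → ℝ) (H : (Fin 3 → ℝ) → (Fin 3 → ℝ) → ℝ)
    (hf : ContDiff ℝ 2 f) (hg : ContDiff ℝ 2 g)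
    (hH : ContDiffOn ℝ 1 (fun x : (Fin 3 → ℝ) × (Fin 3 → ℝ) => H x.1 x.2) {x | x.1 ≠ 0})
    (hrel : ∀ q p : Fin 3 → ℝ, q ≠ 0 →
      f (H q p) = normSq p / 2 - g (H q p) / nrm q)
    (E : ℝ) (hE : f E < 0) :
    ∀ q p : Fin 3 → ℝ, q ≠ 0 → H q p = E →
      deriv f E + deriv g E / nrm q ≠ 0 →
      ∀ i j : Fin 3,
        pbr (LRLbar f g H i) (LRLbar f g H j) q p = ∑ k, levi i j k * cross q p k := by
  intro q p hq hHE hD i j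
  have hn : normSq q ≠ 0 := (normSq_pos' hq).ne'
  have hargpos : (0:ℝ) < -(2 * f E) := by linarith
  have hBne : Real.sqrt (-(2 * f E)) ≠ 0 := (Real.sqrt_pos.2 hargpos).ne'
  have hB2 : Real.sqrt (-(2 * f E)) ^ 2 = -(2 * f E) := Real.sq_sqrt hargpos.le
  have he3 : (-(2 * f E)) ^ 3 ≠ 0 := pow_ne_zero _ (by linarith)
  have hpdq := pdQ_LRLbar f g H hf hg hH hrel E hE q p hq hHE hD
  have hpdp := pdP_LRLbar f g H hf hg hH hrel E hE q p hq hHE hD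
  have hqv := QVal_eq (deriv f E / (deriv f E + deriv g E / nrm q)) (f E) q p hn
  have hhelp := fun X Y X' Y' => bracket_term_helper X Y X' Y' (normSq q)
    (Real.sqrt (-(2 * f E))) (-(2 * f E)) hn hBne hB2
  simp only [pbr, Fin.sum_univ_three, hpdq, hpdp, hqv, hhelp, ← add_div]
  rw [div_eq_iff he3, div_eq_iff hn]
  fin_cases i <;> fin_cases j <;>
  · simp only [Fin.zero_eta, Fin.mk_one, Fin.reduceFinMk, Fin.isValue, QNum, PVal, levi, cross,
      normSq, dotP, Fin.sum_univ_three, Fin.reduceEq, reduceIte, Fin.reduceAdd]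
    norm_num
    try ring

end
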